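/- For any i ∈ I and integer r ≥ 0, in the quantum shuffle algebra g* the r-fold shuffle power of the one-letter word (i) satisfies (i)^{∘r} = [r]_i! · (i^r), where (i^r) denotes the word consisting of r copies of i, (α_i,α_i) = 2d with d ≥ 1, v_i := u^{2d}, [n]_i := Σ_{k=1}^{n} v_i^{n+1−2k}, and [r]_i! := ∏_{k=1}^{r} [k]_i. (Equivalently, the divided power (i)^{∘[r]} := (i)^{∘r}/[r]_i! equals (i^r).) -/

import Mathlib

/-!
A shuffle of the one-letter word `(i)` into a word of length `m` is determined by the position
`p` at which `i` lands, i.e. it is `Fin.cycleRange p`. When all letters equal `i`, this shuffle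
passes `i` over `p` letters and under `m - p` of them, so `2ζ = (α_i,α_i)(2p - m)` and
`(i) ∘ (i^m) = [m+1]_i (i^{m+1})`. Induction on `r` then produces `[r]_i!`.
-/

/-- `σ` is a shuffle of the blocks `{0,…,r-1}` and `{r,…,n-1}` of `Fin n`: the positions
`σ⁻¹` of the letters of each block are increasing.  (This is the set `Σ_{r,n-r}`.) -/
def isShuffle (n r : ℕ) (σ : Equiv.Perm (Fin n)) : Prop :=
  ∀ k l : Fin n, k < l → ((l : ℕ) < r ∨ r ≤ (k : ℕ)) → σ⁻¹ k < σ⁻¹ l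

open Classical in
/-- The finite set `Σ_{r,n-r}` of shuffles of `Fin n` with block boundary `r`. -/
noncomputable def shuffles (n r : ℕ) : Finset (Equiv.Perm (Fin n)) :=
  Finset.univ.filter fun σ => isShuffle n r σ

/-- Twice the exponent `ζ(σ)`: the sum over pairs `(k,l)` with `k` in the first block and
`l` in the second block of `±(α_{j_k}, α_{j_l})`, the sign recording whether the pair is
inverted by `σ` (i.e. `σ⁻¹(l) < σ⁻¹(k)`) or not. -/
def twoZeta {I : Type*} (n r : ℕ) (B : I → I → ℤ) (j : Fin n → I)
    (σ : Equiv.Perm (Fin n)) : ℤ :=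
  ∑ k : Fin n, ∑ l : Fin n,
    if (k : ℕ) < r ∧ r ≤ (l : ℕ) then
      if σ⁻¹ l < σ⁻¹ k then B (j k) (j l) else -B (j k) (j l)
    else 0

/-- The word `𝐣_σ = (j_{σ(1)},…,j_{σ(n)})` obtained by permuting the word `w` by `σ`. -/
def wordPerm {I : Type*} (w : List I) (σ : Equiv.Perm (Fin w.length)) : List I :=
  List.ofFn fun m => w.get (σ m)

/-- The shuffle product of two basis words in the quantum shuffle algebra
`g* = (List I) →₀ R`:  `𝐚 ∘ 𝐛 = ∑_{σ ∈ Σ_{r,s}} v^{ζ(σ)} (𝐚𝐛)_σ` where `r, s` are the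
lengths of `𝐚, 𝐛` and `v^{ζ(σ)} = u^{2ζ(σ)}`. -/
noncomputable def shMulWord {I : Type*} {R : Type*} [CommRing R] (B : I → I → ℤ) (u : Rˣ)
    (a b : List I) : List I →₀ R :=
  ∑ σ ∈ shuffles (a ++ b).length a.length,
    Finsupp.single (wordPerm (a ++ b) σ)
      ((u ^ twoZeta (a ++ b).length a.length B (a ++ b).get σ : Rˣ) : R)

/-- The shuffle product on the quantum shuffle algebra `g* = (List I) →₀ R`, extended
bilinearly from basis words. -/
noncomputable def shMul {I : Type*} {R : Type*} [CommRing R] (B : I → I → ℤ) (u : Rˣ)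
    (x y : List I →₀ R) : List I →₀ R :=
  x.sum fun a ra => y.sum fun b rb => (ra * rb) • shMulWord B u a b

/-- The pairing `(|𝐚|,|𝐛|) = ∑_{k,l} (α_{a_k}, α_{b_l})` of the degrees of two words. -/
def pairWt {I : Type*} (B : I → I → ℤ) (a b : List I) : ℤ :=
  (a.map fun i => (b.map fun i' => B i i').sum).sum

/-- Twice the exponent `η(σ)` for a full permutation `σ`: the sum over all pairs `k < l`
of `±(α_{j_k}, α_{j_l})`, the sign recording whether the pair is inverted by `σ`. -/
def twoEta {I : Type*} (n : ℕ) (B : I → I → ℤ) (j : Fin n → I)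
    (σ : Equiv.Perm (Fin n)) : ℤ :=
  ∑ k : Fin n, ∑ l : Fin n,
    if k < l then
      if σ⁻¹ l < σ⁻¹ k then B (j k) (j l) else -B (j k) (j l)
    else 0

/-- The iterated shuffle product `(j_1) ∘ (j_2) ∘ ⋯ ∘ (j_r)` of one-letter words. -/
noncomputable def iterSingles {I : Type*} {R : Type*} [CommRing R] (B : I → I → ℤ)
    (u : Rˣ) : List I → (List I →₀ R)
  | [] => Finsupp.single [] 1
  | i :: w => shMul B u (Finsupp.single [i] 1) (iterSingles B u w)

/-- The bar-invariant q-integer `[n] = v^{-n+1} + v^{-n+3} + ⋯ + v^{n-1}` for a unit `v`. -/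
noncomputable def qIntBar {R : Type*} [CommRing R] (v : Rˣ) (n : ℕ) : R :=
  ∑ k ∈ Finset.range n, ((v ^ ((n : ℤ) - 1 - 2 * k) : Rˣ) : R)

/-- The bar-invariant q-factorial `[r]! = [1][2]⋯[r]` for a unit `v`. -/
noncomputable def qFactBar {R : Type*} [CommRing R] (v : Rˣ) (r : ℕ) : R :=
  ∏ k ∈ Finset.range r, qIntBar v (k + 1)

theorem mem_shuffles {n r : ℕ} {σ : Equiv.Perm (Fin n)} :
    σ ∈ shuffles n r ↔ isShuffle n r σ := by
  simp [shuffles]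

theorem cycleRange_mem_shuffles {m : ℕ} (p : Fin (m + 1)) :
    Fin.cycleRange p ∈ shuffles (m + 1) 1 := by
  rw [mem_shuffles]
  intro k l hkl hkl'
  obtain ⟨k, rfl⟩ := Fin.exists_succ_eq_of_ne_zero (x := k) (by rintro rfl; simp_all)
  obtain ⟨l, rfl⟩ := Fin.exists_succ_eq_of_ne_zero (x := l) (by rintro rfl; simp_all)
  simpa [Equiv.Perm.inv_def, Fin.cycleRange_symm_succ] using hkl

theorem eq_cycleRange_of_mem_shuffles {m : ℕ} {σ : Equiv.Perm (Fin (m + 1))}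
    (hσ : σ ∈ shuffles (m + 1) 1) : σ = Fin.cycleRange (σ⁻¹ 0) := by
  rw [mem_shuffles] at hσ
  have hmono : StrictMono fun j : Fin m => σ⁻¹ j.succ := fun a b hab =>
    hσ _ _ (Fin.succ_lt_succ_iff.mpr hab) (Or.inr (Nat.succ_pos _))
  have hrange : Set.range (fun j : Fin m => σ⁻¹ j.succ) = Set.range (σ⁻¹ 0).succAbove := by
    rw [show (fun j : Fin m => σ⁻¹ j.succ) = ⇑σ⁻¹ ∘ Fin.succ from rfl, Set.range_comp,
      Fin.range_succ, Fin.range_succAbove, Set.image_compl_eq σ⁻¹.bijective, Set.image_singleton]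
  have hsucc := (hmono.range_inj (Fin.strictMono_succAbove _)).mp hrange
  refine inv_injective (Equiv.ext fun l => ?_)
  rcases Fin.eq_zero_or_eq_succ l with rfl | ⟨l, rfl⟩
  · exact (Fin.cycleRange_symm_zero _).symm
  · exact (congrFun hsucc l).trans (Fin.cycleRange_symm_succ _ l).symm

theorem sum_shuffles_one {M : Type*} [AddCommMonoid M] {m : ℕ}
    (f : Equiv.Perm (Fin (m + 1)) → M) :
    ∑ σ ∈ shuffles (m + 1) 1, f σ = ∑ p, f (Fin.cycleRange p) := by
  refine (Finset.sum_nbij' (fun σ => σ⁻¹ 0) Fin.cycleRange (by simp)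
    (fun p _ => cycleRange_mem_shuffles p) (fun σ hσ => (eq_cycleRange_of_mem_shuffles hσ).symm)
    (fun p _ => Fin.cycleRange_symm_zero p) fun σ hσ => ?_)
  rw [← eq_cycleRange_of_mem_shuffles hσ]

theorem sum_range_ite_lt (c : ℤ) {m p : ℕ} (hp : p ≤ m) :
    ∑ l ∈ Finset.range m, (if l < p then c else -c) = c * (2 * p - m) := by
  rw [← Finset.sum_range_add_sum_Ico _ hp,
    Finset.sum_congr rfl fun l hl => if_pos (Finset.mem_range.mp hl),
    Finset.sum_congr rfl fun l hl => if_neg (Finset.mem_Ico.mp hl).1.not_gt]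
  simp only [Finset.sum_const, Finset.card_range, Nat.card_Ico, smul_neg, nsmul_eq_mul]
  push_cast [hp]
  ring

theorem twoZeta_const_cycleRange {I : Type*} (B : I → I → ℤ) (i : I) {m : ℕ}
    (p : Fin (m + 1)) :
    twoZeta (m + 1) 1 B (fun _ => i) (Fin.cycleRange p) = B i i * (2 * p - m) := by
  have hsucc (j : Fin m) :
      (Fin.cycleRange p)⁻¹ j.succ < (Fin.cycleRange p)⁻¹ 0 ↔ (j : ℕ) < p := by
    rw [Equiv.Perm.inv_def, Fin.cycleRange_symm_succ, Fin.cycleRange_symm_zero,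
      Fin.succAbove_lt_iff_castSucc_lt, Fin.lt_def, Fin.val_castSucc]
  simp only [twoZeta, Fin.sum_univ_succ (n := m), Fin.val_zero, Fin.val_succ, hsucc]
  simp only [Order.lt_one_iff, nonpos_iff_eq_zero, one_ne_zero, and_false, ↓reduceIte,
    le_add_iff_nonneg_left, zero_le, and_self, zero_add, Nat.add_eq_zero_iff, and_true,
    Finset.sum_const_zero, add_zero]
  rw [Fin.sum_univ_eq_sum_range (fun l => if l < (p : ℕ) then B i i else -B i i),
    sum_range_ite_lt _ (Nat.lt_succ_iff.mp p.isLt)]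

theorem sum_fin_zpow_eq_qIntBar {R : Type*} [CommRing R] (v : Rˣ) (m : ℕ) :
    ∑ p : Fin (m + 1), ((v ^ (2 * (p : ℤ) - m) : Rˣ) : R) = qIntBar v (m + 1) := by
  rw [qIntBar, Fin.sum_univ_eq_sum_range (fun p => ((v ^ (2 * (p : ℤ) - m) : Rˣ) : R)),
    ← Finset.sum_range_reflect]
  refine Finset.sum_congr rfl fun k hk => ?_
  have hk : k ≤ m := Nat.lt_succ_iff.mp (Finset.mem_range.mp hk)
  congr 2
  push_cast [Nat.sub_sub, hk]
  ring

theorem sum_shuffles_one_const {I R : Type*} [CommRing R] (B : I → I → ℤ) (u : Rˣ) (i : I)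
    {n : ℕ} (hn : 0 < n) (j : Fin n → I) (hj : ∀ k, j k = i) :
    ∑ σ ∈ shuffles n 1, ((u ^ twoZeta n 1 B j σ : Rˣ) : R) = qIntBar (u ^ B i i) n := by
  obtain ⟨m, rfl⟩ := Nat.exists_eq_add_one.mpr hn
  obtain rfl : j = fun _ => i := funext hj
  rw [sum_shuffles_one, ← sum_fin_zpow_eq_qIntBar]
  simp only [twoZeta_const_cycleRange, zpow_mul]

theorem wordPerm_replicate {I : Type*} (n : ℕ) (i : I)
    (σ : Equiv.Perm (Fin (List.replicate n i).length)) :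
    wordPerm (List.replicate n i) σ = List.replicate n i := by
  simp [wordPerm]

theorem shMulWord_singleton_replicate {I R : Type*} [CommRing R] (B : I → I → ℤ) (u : Rˣ)
    (i : I) (r : ℕ) :
    shMulWord B u [i] (List.replicate r i)
      = Finsupp.single (List.replicate (r + 1) i) (qIntBar (u ^ B i i) (r + 1)) := by
  -- restate over the definitionally equal word `replicate (r + 1) i`, so that the index type
  -- `Fin (List.length _)` need not be rewritten
  change ∑ σ ∈ shuffles (List.replicate (r + 1) i).length 1,
    Finsupp.single (wordPerm (List.replicate (r + 1) i) σ)
      ((u ^ twoZeta _ 1 B (List.replicate (r + 1) i).get σ : Rˣ) : R) = _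
  simp only [wordPerm_replicate]
  rw [← Finsupp.single_finsetSum, sum_shuffles_one_const B u i (by simp) _ (by simp),
    List.length_replicate]

theorem shMul_single_one_single {I R : Type*} [CommRing R] (B : I → I → ℤ) (u : Rˣ)
    (a b : List I) (c : R) :
    shMul B u (Finsupp.single a 1) (Finsupp.single b c) = c • shMulWord B u a b := by
  rw [shMul, Finsupp.sum_single_index (by simp), Finsupp.sum_single_index (by simp), one_mul]

theorem qFactBar_succ {R : Type*} [CommRing R] (v : Rˣ) (r : ℕ) :
    qFactBar v (r + 1) = qFactBar v r * qIntBar v (r + 1) :=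
  Finset.prod_range_succ _ _

theorem shuffle_power_single_general {I : Type*} {R : Type*} [CommRing R] (B : I → I → ℤ)
    (u : Rˣ) (i : I) (d : ℕ)
    (hBii : B i i = 2 * d) (r : ℕ) :
    iterSingles B u (List.replicate r i)
      = qFactBar (u ^ (2 * d)) r • Finsupp.single (List.replicate r i) (1 : R) := by
  have hv : u ^ (2 * d) = u ^ B i i := by rw [hBii]; norm_cast
  induction r with
  | zero => simp [iterSingles, qFactBar]
  | succ r ih =>
    rw [List.replicate_succ, iterSingles, ih, Finsupp.smul_single_one, shMul_single_one_single,
      shMulWord_singleton_replicate, Finsupp.smul_single, qFactBar_succ, hv, smul_eq_mul,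
      Finsupp.smul_single_one, List.replicate_succ]

/-- The `r`-fold shuffle power of a one-letter word: `(i)^{∘r} = [r]_i! · (i^r)`, where
`v_i = u^{2d}` with `(α_i,α_i) = 2d`.  Equivalently the divided power `(i)^{∘[r]}` is the
word `(i^r)`. -/
theorem shuffle_power_single {I : Type*} {R : Type*} [CommRing R] (B : I → I → ℤ)
    (hB : ∀ i j, B i j = B j i) (u : Rˣ) (i : I) (d : ℕ) (hd : 1 ≤ d)
    (hBii : B i i = 2 * d) (r : ℕ) :
    iterSingles B u (List.replicate r i)
      = qFactBar (u ^ (2 * d)) r • Finsupp.single (List.replicate r i) (1 : R) :=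
  shuffle_power_single_general B u i d hBii r
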